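/- arXiv:2202.00913 — 2 statements merged into one kernel-verified Lean document; each statement's English description precedes it below -/
import Mathlib

section
/- Fix S ⊆ {1, …, d}. Assume that the family of decision rules φ_n has pointwise asymptotic level and pointwise asymptotic power for the hypothesis pair (H_{0,S}, H_{A,S}) and for each of the hypothesis pairs (H_{0,S\{j}}, H_{A,S\{j}}), j ∈ S. Then the combined decision rule φ^MI_n has pointwise asymptotic power of at least 1 − α against H^MI_{A,S}: for all α ∈ (0,1), inf_{P ∈ H^MI_{A,S}} liminf_{n→∞} P(φ^MI_n(S, α) = 1) ≥ 1 − α. -/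
open MeasureTheory Filter

/-- The combined decision rule for testing minimal invariance:
`φ^MI_n(S, α) = 1` iff `φ_n(S, α) = 1` or `φ_n(S \ {j}, α) = 0` for some
`j ∈ S` (for `S = ∅` this reduces to `φ^MI_n(∅, α) = φ_n(∅, α)`). -/
def phiMI {Ω : Type*} {d : ℕ} (φ : ℕ → Set (Fin d) → ℝ → Ω → Prop)
    (n : ℕ) (S : Set (Fin d)) (α : ℝ) (ω : Ω) : Prop :=
  φ n S α ω ∨ ∃ j ∈ S, ¬ φ n (S \ {j}) α ω

/-- The null hypothesis of minimal invariance: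
`H^MI_{0,S} = H_{0,S} ∩ ⋂_{j ∈ S} (Pfam \ H_{0, S \ {j}})`. -/
def HMI0 {Ω : Type*} [MeasurableSpace Ω] {d : ℕ}
    (Pfam : Set (Measure Ω)) (H0 : Set (Fin d) → Set (Measure Ω))
    (S : Set (Fin d)) : Set (Measure Ω) :=
  H0 S ∩ ⋂ j ∈ S, (Pfam \ H0 (S \ {j}))

/-- The elements of a collection of subsets of `{1, …, d}` that are minimal
with respect to set inclusion. -/
def minimalSets {d : ℕ} (C : Set (Set (Fin d))) : Set (Set (Fin d)) :=
  {S | S ∈ C ∧ ∀ S' ∈ C, ¬ S' ⊂ S}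

/-- if the family `φ_n` has pointwise asymptotic level and
pointwise asymptotic power for `S` and for each `S \ {j}`, `j ∈ S`, then the
combined rule `φ^MI_n` has pointwise asymptotic power of at least `1 - α`
against `H^MI_{A,S} = Pfam \ H^MI_{0,S}`: for all `α ∈ (0,1)`,
`inf_{P ∈ H^MI_{A,S}} liminf_n P(φ^MI_n(S,α) = 1) ≥ 1 - α`. -/
theorem phiMI_pointwise_power {Ω : Type*} [MeasurableSpace Ω]
    (Pfam : Set (Measure Ω)) (hprob : ∀ P ∈ Pfam, IsProbabilityMeasure P)
    (d : ℕ) (hd : 1 ≤ d)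
    (φ : ℕ → Set (Fin d) → ℝ → Ω → Prop)
    (H0 : Set (Fin d) → Set (Measure Ω)) (hH0 : ∀ T, H0 T ⊆ Pfam)
    (S : Set (Fin d))
    (level : ∀ T : Set (Fin d), (T = S ∨ ∃ j ∈ S, T = S \ {j}) →
      ∀ α ∈ Set.Ioo (0 : ℝ) 1,
        (⨆ P ∈ H0 T, limsup (fun n => P {ω | φ n T α ω}) atTop)
          ≤ ENNReal.ofReal α)
    (power : ∀ T : Set (Fin d), (T = S ∨ ∃ j ∈ S, T = S \ {j}) →
      ∀ α ∈ Set.Ioo (0 : ℝ) 1,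
        (⨅ P ∈ Pfam \ H0 T, liminf (fun n => P {ω | φ n T α ω}) atTop) = 1) :
    ∀ α ∈ Set.Ioo (0 : ℝ) 1,
      ENNReal.ofReal (1 - α) ≤
        ⨅ P ∈ Pfam \ HMI0 Pfam H0 S,
          liminf (fun n => P {ω | phiMI φ n S α ω}) atTop := by
  intro α hα
  refine le_iInf₂ fun P hP => ?_
  obtain ⟨hPfam, hPnot⟩ := hP
  haveI := hprob P hPfam
  by_cases hS : P ∈ H0 S
  · -- P ∈ H0 S, so some j ∈ S has P ∈ H0 (S \ {j})
    have hex : ∃ j ∈ S, P ∈ H0 (S \ {j}) := by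
      by_contra h
      push_neg at h
      exact hPnot ⟨hS, Set.mem_iInter₂.mpr fun j hj => ⟨hPfam, h j hj⟩⟩
    obtain ⟨j, hj, hPj⟩ := hex
    have hlim : limsup (fun n => P {ω | φ n (S \ {j}) α ω}) atTop ≤ ENNReal.ofReal α :=
      le_trans (le_iSup₂ (f := fun (Q : Measure Ω) (_ : Q ∈ H0 (S \ {j})) =>
        limsup (fun n => Q {ω | φ n (S \ {j}) α ω}) atTop) P hPj)
        (level (S \ {j}) (Or.inr ⟨j, hj, rfl⟩) α hα)
    rw [Filter.le_liminf_iff]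
    intro b hb
    have hofr : ENNReal.ofReal (1 - α) = 1 - ENNReal.ofReal α := by
      rw [ENNReal.ofReal_sub _ (le_of_lt hα.1), ENNReal.ofReal_one]
    rw [hofr] at hb
    have hba : b + ENNReal.ofReal α < 1 := lt_tsub_iff_right.mp hb
    have halt : ENNReal.ofReal α < 1 - b := by
      rw [lt_tsub_iff_right, add_comm]; exact hba
    have hev : ∀ᶠ n in atTop, P {ω | φ n (S \ {j}) α ω} < 1 - b :=
      Filter.eventually_lt_of_limsup_lt (lt_of_le_of_lt hlim halt)
    filter_upwards [hev] with n hn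
    have h1 : b < 1 - P {ω | φ n (S \ {j}) α ω} := by
      rw [lt_tsub_iff_right, add_comm]
      exact lt_tsub_iff_right.mp hn
    have h2 : 1 - P {ω | φ n (S \ {j}) α ω} ≤ P {ω | ¬ φ n (S \ {j}) α ω} := by
      rw [tsub_le_iff_left]
      calc (1 : ENNReal) = P Set.univ := measure_univ.symm
        _ ≤ P ({ω | φ n (S \ {j}) α ω} ∪ {ω | ¬ φ n (S \ {j}) α ω}) := by
            apply measure_mono; intro ω _; by_cases h : φ n (S \ {j}) α ω
            · exact Or.inl h
            · exact Or.inr h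
        _ ≤ _ := measure_union_le _ _
    have h3 : P {ω | ¬ φ n (S \ {j}) α ω} ≤ P {ω | phiMI φ n S α ω} :=
      measure_mono fun ω h => Or.inr ⟨j, hj, h⟩
    exact lt_of_lt_of_le h1 (le_trans h2 h3)
  · -- P ∉ H0 S
    have h1 : (1 : ENNReal) ≤ liminf (fun n => P {ω | φ n S α ω}) atTop := by
      have := power S (Or.inl rfl) α hα
      calc (1 : ENNReal) = ⨅ Q ∈ Pfam \ H0 S, liminf (fun n => Q {ω | φ n S α ω}) atTop :=
            this.symm
        _ ≤ _ := iInf₂_le P ⟨hPfam, hS⟩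
    have h2 : liminf (fun n => P {ω | φ n S α ω}) atTop ≤
        liminf (fun n => P {ω | phiMI φ n S α ω}) atTop := by
      exact Filter.liminf_le_liminf (Eventually.of_forall fun n =>
        measure_mono fun ω h => Or.inl h)
    exact le_trans (ENNReal.ofReal_le_one.mpr (by linarith [hα.1])) (le_trans h1 h2)
end

section
/- Fix α ∈ (0,1), set C := 2^d, and fix P ∈ 𝒫. Assume (level) that for every S ∈ MI(P), limsup_{n→∞} P(φ_n(S, αC^{-1}) = 1) ≤ αC^{-1}, and (power) that for every S ⊆ {1, …, d} that is not a superset of any element of MI(P), lim_{n→∞} P(φ_n(S, αC^{-1}) = 0) = 0. For each n, let Î_n := {S ⊆ {1, …, d} : φ_n(S, αC^{-1}) = 0}, let M̂I_n be the collection of elements of Î_n that are minimal with respect to set inclusion, and let Ŝ_n := ⋃_{S ∈ M̂I_n} S. Then liminf_{n→∞} P(Ŝ_n = S_AS(P)) ≥ liminf_{n→∞} P(M̂I_n = MI(P)) ≥ 1 − α. -/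
/-!
On the event that every minimally invariant set is accepted and every set containing no minimally
invariant set is rejected, every accepted set contains a minimally invariant one, so the minimal
accepted sets are exactly the minimally invariant sets. The complement of that event is covered by
one error event per subset of `{1, …, d}`, each of asymptotic probability at most `α / 2 ^ d` by
the level and power assumptions; a union bound over the `2 ^ d` subsets gives the claim.
-/

open MeasureTheory Filter

open scoped ENNReal Topology

/-- Unlike `ENNReal.limsup_add_le`, this needs no `CountableInterFilter`, so it applies to
`atTop`. -/
theorem ENNReal.limsup_add_le' {α : Type*} {f : Filter α} (u v : α → ℝ≥0∞) :
    limsup (u + v) f ≤ limsup u f + limsup v f := by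
  refine le_of_forall_gt_imp_ge_of_dense fun c hc => ?_
  obtain ⟨a, ha, b, hb, hab⟩ := ENNReal.exists_add_lt_of_add_lt hc
  refine limsup_le_of_le (by isBoundedDefault) ?_
  filter_upwards [eventually_lt_of_limsup_lt ha, eventually_lt_of_limsup_lt hb] with x hax hbx
  exact (ENNReal.add_lt_add hax hbx).le.trans hab.le

theorem ENNReal.limsup_sum_le {ι α : Type*} {f : Filter α} (s : Finset ι) (u : ι → α → ℝ≥0∞) :
    limsup (fun a => ∑ i ∈ s, u i a) f ≤ ∑ i ∈ s, limsup (u i) f := by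
  classical
  induction s using Finset.induction_on with
  | empty => exact (limsup_const_bot (f := f)).le
  | insert i s hi ih =>
    simp only [Finset.sum_insert hi]
    exact (ENNReal.limsup_add_le' (u i) _).trans (add_le_add le_rfl ih)

namespace MeasureTheory

variable {Ω α : Type*} [MeasurableSpace Ω] {f : Filter α}

theorem limsup_measure_le_sum_of_subset_iUnion {ι : Type*} [Fintype ι] (μ : Measure Ω)
    {B : α → Set Ω} {E : ι → α → Set Ω} (hB : ∀ a, B a ⊆ ⋃ i, E i a) :
    limsup (fun a => μ (B a)) f ≤ ∑ i, limsup (fun a => μ (E i a)) f :=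
  calc limsup (fun a => μ (B a)) f
      ≤ limsup (fun a => ∑ i, μ (E i a)) f :=
        limsup_le_limsup (Eventually.of_forall fun a =>
          (measure_mono (hB a)).trans (measure_iUnion_fintype_le μ _))
    _ ≤ ∑ i, limsup (fun a => μ (E i a)) f := ENNReal.limsup_sum_le _ _

theorem one_sub_le_liminf_measure [f.NeBot] (μ : Measure Ω) [IsProbabilityMeasure μ]
    {A : α → Set Ω} {ε : ℝ≥0∞} (h : limsup (fun a => μ (A a)ᶜ) f ≤ ε) :
    1 - ε ≤ liminf (fun a => μ (A a)) f :=
  calc 1 - ε ≤ 1 - limsup (fun a => μ (A a)ᶜ) f := tsub_le_tsub_left h 1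
    _ = liminf (fun a => 1 - μ (A a)ᶜ) f := (ENNReal.liminf_const_sub f _ ENNReal.one_ne_top).symm
    _ ≤ liminf (fun a => μ (A a)) f :=
        liminf_le_liminf (Eventually.of_forall fun a => tsub_le_iff_right.2 <|
          measure_univ (μ := μ) ▸ measure_univ_le_add_compl (A a))

end MeasureTheory

section InvariantSetSelection

variable {d : ℕ}

theorem minimalSets_eq_of_forall_exists_subset {C M : Set (Set (Fin d))}
    (hM : ∀ S ∈ M, ∀ T ∈ M, ¬ T ⊂ S) (hMC : M ⊆ C) (hC : ∀ S ∈ C, ∃ T ∈ M, T ⊆ S) :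
    minimalSets C = M := by
  ext S
  constructor
  · rintro ⟨hSC, hSmin⟩
    obtain ⟨T, hTM, hTS⟩ := hC S hSC
    obtain rfl | hTS := hTS.eq_or_ssubset
    · exact hTM
    · exact absurd hTS (hSmin T (hMC hTM))
  · intro hSM
    refine ⟨hMC hSM, fun T hTC hTS => ?_⟩
    obtain ⟨U, hUM, hUT⟩ := hC T hTC
    exact hM S hSM U hUM (hUT.trans_ssubset hTS)

variable {Ω : Type*}

/-- `ψ n S ω` says that the test of `S` at sample size `n` rejects. The error event at `S`
is a false rejection if `S ∈ M`, a false acceptance if `S` contains no element of `M`. -/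
def selectionError (ψ : ℕ → Set (Fin d) → Ω → Prop) (M : Set (Set (Fin d))) (n : ℕ)
    (S : Set (Fin d)) : Set Ω :=
  {ω | S ∈ M ∧ ψ n S ω ∨ (¬ ∃ T ∈ M, T ⊆ S) ∧ ¬ ψ n S ω}

theorem compl_setOf_minimalSets_eq_subset_iUnion_selectionError
    (ψ : ℕ → Set (Fin d) → Ω → Prop) (I : Set (Set (Fin d))) (n : ℕ) :
    {ω | minimalSets {T | ¬ ψ n T ω} = minimalSets I}ᶜ
      ⊆ ⋃ S, selectionError ψ (minimalSets I) n S := by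
  intro ω hω
  by_contra hnot
  simp only [Set.mem_iUnion, not_exists] at hnot
  have hno_error (S : Set (Fin d)) := not_or.1 (hnot S)
  exact hω <| minimalSets_eq_of_forall_exists_subset (fun S hS T hT => hS.2 T hT.1)
    (fun S hS hrej => (hno_error S).1 ⟨hS, hrej⟩)
    fun S hacc => by_contra fun hbad => (hno_error S).2 ⟨hbad, hacc⟩

theorem limsup_measure_selectionError_le [MeasurableSpace Ω] (μ : Measure Ω)
    (ψ : ℕ → Set (Fin d) → Ω → Prop) (M : Set (Set (Fin d))) (S : Set (Fin d)) {c : ℝ≥0∞}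
    (level : S ∈ M → limsup (fun n => μ {ω | ψ n S ω}) atTop ≤ c)
    (power : (¬ ∃ T ∈ M, T ⊆ S) →
      Tendsto (fun n => μ {ω | ¬ ψ n S ω}) atTop (𝓝 0)) :
    limsup (fun n => μ (selectionError ψ M n S)) atTop ≤ c := by
  by_cases hS : S ∈ M
  · refine (limsup_le_limsup (Eventually.of_forall fun n => measure_mono ?_)).trans (level hS)
    rintro ω (h | ⟨hbad, -⟩)
    exacts [h.2, absurd ⟨S, hS, subset_rfl⟩ hbad]
  by_cases hbad : ¬ ∃ T ∈ M, T ⊆ S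
  · refine (limsup_le_limsup (Eventually.of_forall fun n => measure_mono ?_)).trans
      ((power hbad).limsup_eq.trans_le zero_le)
    rintro ω (h | h)
    exacts [absurd h.1 hS, h.2]
  · have hempty : ∀ n, selectionError ψ M n S = ∅ := fun n => by
      simp [selectionError, hS, hbad]
    simp [hempty]

end InvariantSetSelection

theorem ENNReal.two_pow_mul_ofReal_div_two_pow (d : ℕ) (α : ℝ) :
    (2 : ℝ≥0∞) ^ d * ENNReal.ofReal (α / 2 ^ d) = ENNReal.ofReal α := by
  rw [ENNReal.ofReal_div_of_pos (by positivity), ENNReal.ofReal_pow zero_le_two,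
    ENNReal.ofReal_ofNat, ENNReal.mul_div_cancel (by positivity) (by simp)]

theorem IAS_consistency_general {Ω : Type*} [MeasurableSpace Ω]
    (Pfam : Set (Measure Ω)) (hprob : ∀ P ∈ Pfam, IsProbabilityMeasure P)
    (d : ℕ)
    (φ : ℕ → Set (Fin d) → ℝ → Ω → Prop)
    (H0 : Set (Fin d) → Set (Measure Ω))
    (α : ℝ) (hα : α ∈ Set.Ioo (0 : ℝ) 1)
    (P : Measure Ω) (hP : P ∈ Pfam)
    (level : ∀ S ∈ minimalSets {T : Set (Fin d) | P ∈ H0 T},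
      limsup (fun n => P {ω | φ n S (α / 2 ^ d) ω}) atTop
        ≤ ENNReal.ofReal (α / 2 ^ d))
    (power : ∀ S : Set (Fin d),
      (¬ ∃ S' ∈ minimalSets {T : Set (Fin d) | P ∈ H0 T}, S' ⊆ S) →
      Tendsto (fun n => P {ω | ¬ φ n S (α / 2 ^ d) ω}) atTop (nhds 0)) :
    liminf (fun n =>
        P {ω | minimalSets {T : Set (Fin d) | ¬ φ n T (α / 2 ^ d) ω}
            = minimalSets {T : Set (Fin d) | P ∈ H0 T}}) atTop
      ≤ liminf (fun n =>
        P {ω | ⋃₀ minimalSets {T : Set (Fin d) | ¬ φ n T (α / 2 ^ d) ω}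
            = ⋃₀ minimalSets {T : Set (Fin d) | P ∈ H0 T}}) atTop ∧
    ENNReal.ofReal (1 - α) ≤
      liminf (fun n =>
        P {ω | minimalSets {T : Set (Fin d) | ¬ φ n T (α / 2 ^ d) ω}
            = minimalSets {T : Set (Fin d) | P ∈ H0 T}}) atTop := by
  have := hprob P hP
  set ψ : ℕ → Set (Fin d) → Ω → Prop := fun n S => φ n S (α / 2 ^ d)
  set MI := minimalSets {T : Set (Fin d) | P ∈ H0 T}
  refine ⟨liminf_le_liminf (Eventually.of_forall fun n =>
    measure_mono fun ω (hω : _ = _) => congrArg Set.sUnion hω), ?_⟩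
  rw [ENNReal.ofReal_sub 1 hα.1.le, ENNReal.ofReal_one]
  refine one_sub_le_liminf_measure P ?_
  calc limsup (fun n => P {ω | minimalSets {T | ¬ ψ n T ω} = MI}ᶜ) atTop
      ≤ ∑ S, limsup (fun n => P (selectionError ψ MI n S)) atTop :=
        limsup_measure_le_sum_of_subset_iUnion P
          (compl_setOf_minimalSets_eq_subset_iUnion_selectionError ψ _)
    _ ≤ ∑ _S : Set (Fin d), ENNReal.ofReal (α / 2 ^ d) := Finset.sum_le_sum fun S _ =>
        limsup_measure_selectionError_le P ψ MI S (level S) (power S)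
    _ = ENNReal.ofReal α := by
        rw [Finset.sum_const, Finset.card_univ, Fintype.card_set, Fintype.card_fin, nsmul_eq_mul,
          Nat.cast_pow, Nat.cast_ofNat, ENNReal.two_pow_mul_ofReal_div_two_pow]

/-- with `C = 2^d`, if `φ_n(·, α/C)` has asymptotic level
`α/C` for every minimally invariant set and asymptotic power against every
set that is not a superset of a minimally invariant set, then, with
`Î_n = {S : φ_n(S, α/C) = 0}`, `M̂I_n` its inclusion-minimal elements and
`Ŝ_n = ⋃ M̂I_n`,
`liminf_n P(Ŝ_n = S_AS(P)) ≥ liminf_n P(M̂I_n = MI(P)) ≥ 1 - α`. -/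
theorem IAS_consistency {Ω : Type*} [MeasurableSpace Ω]
    (Pfam : Set (Measure Ω)) (hprob : ∀ P ∈ Pfam, IsProbabilityMeasure P)
    (d : ℕ) (hd : 1 ≤ d)
    (φ : ℕ → Set (Fin d) → ℝ → Ω → Prop)
    (H0 : Set (Fin d) → Set (Measure Ω))
    (α : ℝ) (hα : α ∈ Set.Ioo (0 : ℝ) 1)
    (P : Measure Ω) (hP : P ∈ Pfam)
    (level : ∀ S ∈ minimalSets {T : Set (Fin d) | P ∈ H0 T},
      limsup (fun n => P {ω | φ n S (α / 2 ^ d) ω}) atTop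
        ≤ ENNReal.ofReal (α / 2 ^ d))
    (power : ∀ S : Set (Fin d),
      (¬ ∃ S' ∈ minimalSets {T : Set (Fin d) | P ∈ H0 T}, S' ⊆ S) →
      Tendsto (fun n => P {ω | ¬ φ n S (α / 2 ^ d) ω}) atTop (nhds 0)) :
    liminf (fun n =>
        P {ω | minimalSets {T : Set (Fin d) | ¬ φ n T (α / 2 ^ d) ω}
            = minimalSets {T : Set (Fin d) | P ∈ H0 T}}) atTop
      ≤ liminf (fun n =>
        P {ω | ⋃₀ minimalSets {T : Set (Fin d) | ¬ φ n T (α / 2 ^ d) ω}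
            = ⋃₀ minimalSets {T : Set (Fin d) | P ∈ H0 T}}) atTop ∧
    ENNReal.ofReal (1 - α) ≤
      liminf (fun n =>
        P {ω | minimalSets {T : Set (Fin d) | ¬ φ n T (α / 2 ^ d) ω}
            = minimalSets {T : Set (Fin d) | P ∈ H0 T}}) atTop :=
  IAS_consistency_general Pfam hprob d φ H0 α hα P hP level power
end
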